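/- arXiv:0911.2751 — 2 statements merged into one kernel-verified Lean document; each statement's English description precedes it below -/
import Mathlib

section
/- Let 𝔛 be a Hilbert module over a unital C*-algebra 𝔄, and e₁,…,e_m ∈ 𝔛 with ⟨eᵢ,eⱼ⟩ = 0 for i ≠ j and |eₖ| ≤ 1 (i.e. ⟨eₖ,eₖ⟩ ≤ 1). Let x₁,…,xₙ ∈ 𝔛 and M_{jk} ≥ 0 be real scalars such that ‖xⱼ‖·1 − Re⟨eₖ,xⱼ⟩ ≤ M_{jk}·1 in 𝔄 for all 1 ≤ j ≤ n, 1 ≤ k ≤ m. Then ∑ⱼ‖xⱼ‖ ≤ (1/√m)‖∑ⱼ xⱼ‖ + (1/m)∑ⱼ∑ₖ M_{jk}. -/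
open scoped RightActions

/-- Hermitian real part of an element of a complex *-algebra. -/
noncomputable def cre {A : Type*} [Ring A] [StarRing A] [Module ℂ A] (a : A) : A :=
  (2 : ℂ)⁻¹ • (a + star a)

/-- Hermitian imaginary part of an element of a complex *-algebra. -/
noncomputable def cim {A : Type*} [Ring A] [StarRing A] [Module ℂ A] (a : A) : A :=
  (2 * Complex.I)⁻¹ • (a - star a)

/-- The December 2024 Mathlib `CStarModule` (right `A`-module, via `Aᵐᵒᵖ`), restated with its
old axioms, since Mathlib's `CStarModule` now describes left modules. -/
class CStarModuleOld (A E : Type*) [NonUnitalSemiring A] [StarRing A] [Module ℂ A]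
    [AddCommGroup E] [Module ℂ E] [PartialOrder A] [SMul Aᵐᵒᵖ E] [Norm A] [Norm E]
    extends Inner A E where
  inner_add_right {x} {y} {z} : inner x (y + z) = inner x y + inner x z
  inner_self_nonneg {x} : 0 ≤ inner x x
  inner_self {x} : inner x x = 0 ↔ x = 0
  inner_op_smul_right {a : A} {x y : E} : inner x (y <• a) = inner x y * a
  inner_smul_right_complex {z : ℂ} {x} {y} : inner x (z • y) = z • inner x y
  star_inner x y : star (inner x y) = inner y x
  norm_eq_sqrt_norm_inner_self x : ‖x‖ = √‖inner x x‖

/-!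
Summing the hypotheses over `j` and `k` gives
`(m ∑ⱼ ‖xⱼ‖) • 1 - Re ⟨∑ₖ eₖ, ∑ⱼ xⱼ⟩ ≤ (∑ⱼ ∑ₖ M j k) • 1`. The real part of `⟨y, z⟩` is at most
`(‖y‖ ‖z‖) • 1`: expand `0 ≤ ⟨y - t • z, y - t • z⟩` and take `t = ‖y‖ / ‖z‖`. Orthogonality gives
`⟨∑ₖ eₖ, ∑ₖ eₖ⟩ = ∑ₖ ⟨eₖ, eₖ⟩ ≤ m`, hence `‖∑ₖ eₖ‖ ≤ √m`, and comparing the scalar multiples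
of `1` gives the inequality.
-/

open ComplexStarModule

lemma cre_eq_realPart {A : Type*} [Ring A] [StarRing A] [Module ℂ A] [StarModule ℂ A] (a : A) :
    cre a = ℜ a := by
  rw [realPart_apply_coe, cre, ← Complex.coe_smul]
  norm_num

lemma cre_sum {A ι : Type*} [Ring A] [StarRing A] [Module ℂ A] [StarModule ℂ A] (s : Finset ι)
    (f : ι → A) :
    cre (∑ i ∈ s, f i) = ∑ i ∈ s, cre (f i) := by
  simp [cre_eq_realPart]

namespace CStarModuleOld

variable {A E : Type*} [CStarAlgebra A] [PartialOrder A] [AddCommGroup E] [Module ℂ E]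
  [SMul Aᵐᵒᵖ E] [Norm E] [CStarModuleOld A E]

def innerRight (x : E) : E →+ A := AddMonoidHom.mk' (inner A x) fun _ _ => inner_add_right

lemma inner_sum_right {ι : Type*} (s : Finset ι) (x : E) (y : ι → E) :
    inner A x (∑ i ∈ s, y i) = ∑ i ∈ s, inner A x (y i) :=
  map_sum (innerRight x) y s

lemma inner_sum_left {ι : Type*} (s : Finset ι) (x : ι → E) (y : E) :
    inner A (∑ i ∈ s, x i) y = ∑ i ∈ s, inner A (x i) y := by
  rw [← star_inner, inner_sum_right, star_sum]
  simp only [star_inner]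

lemma inner_sub_right (x y z : E) : inner A x (y - z) = inner A x y - inner A x z :=
  map_sub (innerRight x) y z

lemma inner_sub_left (x y z : E) : inner A (x - y) z = inner A x z - inner A y z := by
  rw [← star_inner, inner_sub_right, star_sub, star_inner, star_inner]

lemma inner_zero_right (x : E) : inner A x (0 : E) = 0 :=
  map_zero (innerRight x)

lemma inner_zero_left (x : E) : inner A (0 : E) x = 0 := by
  rw [← star_inner, inner_zero_right, star_zero]

lemma inner_smul_right_real (r : ℝ) (x y : E) : inner A x (r • y) = r • inner A x y := by
  rw [← Complex.coe_smul, inner_smul_right_complex, Complex.coe_smul]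

lemma inner_smul_left_real (r : ℝ) (x y : E) : inner A (r • x) y = r • inner A x y := by
  rw [← star_inner, inner_smul_right_real, star_smul, star_trivial, star_inner]

lemma inner_add_inner_swap (x y : E) :
    inner A x y + inner A y x = (2 : ℝ) • cre (inner A x y) := by
  rw [cre_eq_realPart, realPart_apply_coe, smul_smul, ← star_inner x y]
  norm_num

protected lemma norm_nonneg (A : Type*) [CStarAlgebra A] [PartialOrder A] [SMul Aᵐᵒᵖ E]
    [CStarModuleOld A E] (x : E) : 0 ≤ ‖x‖ := by
  rw [norm_eq_sqrt_norm_inner_self (A := A)]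
  exact Real.sqrt_nonneg _

variable (A) in
lemma norm_sq_eq (x : E) : ‖x‖ ^ 2 = ‖inner A x x‖ := by
  rw [norm_eq_sqrt_norm_inner_self (A := A), Real.sq_sqrt (_root_.norm_nonneg _)]

variable [StarOrderedRing A]

lemma inner_self_le_norm_sq_smul_one (x : E) : inner A x x ≤ ‖x‖ ^ 2 • (1 : A) := by
  rw [← Algebra.algebraMap_eq_smul_one, ← CStarAlgebra.norm_le_iff_le_algebraMap _ (sq_nonneg _)
    inner_self_nonneg, norm_sq_eq A]

lemma two_mul_smul_cre_inner_le (x y : E) (t : ℝ) :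
    (2 * t) • cre (inner A x y) ≤ (‖x‖ ^ 2 + t ^ 2 * ‖y‖ ^ 2) • (1 : A) := by
  have expand : inner A (x - t • y) (x - t • y)
      = inner A x x + t ^ 2 • inner A y y - (2 * t) • cre (inner A x y) := by
    rw [mul_comm, mul_smul, ← inner_add_inner_swap]
    simp only [inner_sub_left, inner_sub_right, inner_smul_left_real, inner_smul_right_real]
    module
  have := (inner_self_nonneg (A := A) (x := x - t • y))
  rw [expand, sub_nonneg] at this
  calc _ ≤ inner A x x + t ^ 2 • inner A y y := this
    _ ≤ ‖x‖ ^ 2 • (1 : A) + t ^ 2 • ‖y‖ ^ 2 • (1 : A) := by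
      gcongr
      · exact inner_self_le_norm_sq_smul_one x
      · exact inner_self_le_norm_sq_smul_one y
    _ = _ := by module

lemma cre_inner_le (x y : E) : cre (inner A x y) ≤ (‖x‖ * ‖y‖) • (1 : A) := by
  have norm_mul_nonneg : 0 ≤ ‖x‖ * ‖y‖ :=
    mul_nonneg (CStarModuleOld.norm_nonneg A x) (CStarModuleOld.norm_nonneg A y)
  rcases eq_or_ne x 0 with rfl | hx
  · simpa [inner_zero_left, cre] using smul_nonneg norm_mul_nonneg zero_le_one
  rcases eq_or_ne y 0 with rfl | hy
  · simpa [inner_zero_right, cre] using smul_nonneg norm_mul_nonneg zero_le_one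
  have norm_pos {z : E} (hz : z ≠ 0) : 0 < ‖z‖ := by
    rwa [norm_eq_sqrt_norm_inner_self (A := A), Real.sqrt_pos, norm_pos_iff, Ne, inner_self]
  have hx' := norm_pos hx
  have hy' := norm_pos hy
  have ht : 0 < 2 * (‖x‖ / ‖y‖) := by positivity
  have key := two_mul_smul_cre_inner_le (A := A) x y (‖x‖ / ‖y‖)
  rwa [show ‖x‖ ^ 2 + (‖x‖ / ‖y‖) ^ 2 * ‖y‖ ^ 2 = 2 * (‖x‖ / ‖y‖) * (‖x‖ * ‖y‖) by
    field_simp; ring, mul_smul (2 * (‖x‖ / ‖y‖)) (‖x‖ * ‖y‖), smul_le_smul_iff_of_pos_left ht]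
    at key

lemma norm_sum_le_sqrt_card_of_pairwise_inner_eq_zero {κ : Type*} [Fintype κ] (e : κ → E)
    (horth : Pairwise fun i j => inner A (e i) (e j) = 0) (he : ∀ k, inner A (e k) (e k) ≤ 1) :
    ‖∑ k, e k‖ ≤ √(Fintype.card κ) := by
  have inner_sum_self : inner A (∑ k, e k) (∑ k, e k) = ∑ k, inner A (e k) (e k) := by
    simp only [inner_sum_left, inner_sum_right]
    exact Finset.sum_congr rfl fun i _ =>
      Finset.sum_eq_single i (fun j _ hji => horth hji) (by simp)
  rw [norm_eq_sqrt_norm_inner_self (A := A)]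
  gcongr
  rw [CStarAlgebra.norm_le_natCast_iff_of_nonneg _ _ inner_self_nonneg, inner_sum_self]
  calc _ ≤ ∑ _k : κ, (1 : A) := Finset.sum_le_sum fun k _ => he k
    _ = Fintype.card κ := by simp

lemma card_mul_sum_norm_le {ι κ : Type*} [Fintype ι] [Fintype κ] (e : κ → E) (x : ι → E)
    (M : ι → κ → ℝ) (hM : ∀ j k, 0 ≤ M j k)
    (h : ∀ j k, ‖x j‖ • (1 : A) - cre (inner A (e k) (x j)) ≤ M j k • (1 : A)) :
    Fintype.card κ * ∑ j, ‖x j‖ ≤ ‖∑ k, e k‖ * ‖∑ j, x j‖ + ∑ j, ∑ k, M j k := by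
  -- In the zero algebra `r • 1 ≤ s • 1` says nothing about `r, s`, but every norm vanishes.
  rcases subsingleton_or_nontrivial A with hA | hA
  · have norm_eq_zero (y : E) : ‖y‖ = 0 := by
      rw [norm_eq_sqrt_norm_inner_self (A := A), Subsingleton.elim (inner A y y) 0, norm_zero,
        Real.sqrt_zero]
    simp only [norm_eq_zero, Finset.sum_const_zero, mul_zero, zero_add]
    exact Finset.sum_nonneg fun j _ => Finset.sum_nonneg fun k _ => hM j k
  have sum_hyp_eq : ∑ j, ∑ k, (‖x j‖ • (1 : A) - cre (inner A (e k) (x j)))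
      = (Fintype.card κ * ∑ j, ‖x j‖) • (1 : A) - cre (inner A (∑ k, e k) (∑ j, x j)) := by
    simp only [inner_sum_left, inner_sum_right, cre_sum, Finset.sum_sub_distrib]
    rw [Finset.sum_comm (f := fun j k => cre (inner A (e k) (x j)))]
    simp only [Finset.sum_const, Finset.card_univ, ← Nat.cast_smul_eq_nsmul ℝ, smul_smul,
      Finset.mul_sum, Finset.sum_smul]
  have summed := Finset.sum_le_sum fun j (_ : j ∈ Finset.univ) =>
    Finset.sum_le_sum fun k (_ : k ∈ Finset.univ) => h j k
  rw [sum_hyp_eq, sub_le_iff_le_add] at summed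
  have := summed.trans (add_le_add_right (cre_inner_le _ _) _)
  simp only [← Finset.sum_smul, ← add_smul] at this
  have := (smul_le_smul_iff_of_pos_right zero_lt_one).1 this
  linarith

end CStarModuleOld

theorem stmt8 {A E : Type*} [CStarAlgebra A] [PartialOrder A] [StarOrderedRing A]
    [AddCommGroup E] [Module ℂ E] [SMul Aᵐᵒᵖ E] [Norm E] [CStarModuleOld A E]
    (m n : ℕ) (hm : 0 < m) (e : Fin m → E) (x : Fin n → E)
    (horth : ∀ i j, i ≠ j → (inner A (e i) (e j) : A) = 0)
    (he : ∀ k, (inner A (e k) (e k) : A) ≤ 1)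
    (M : Fin n → Fin m → ℝ) (hM : ∀ j k, 0 ≤ M j k)
    (h : ∀ j k, ‖x j‖ • (1 : A) - cre (inner A (e k) (x j) : A) ≤ (M j k) • (1 : A)) :
    ∑ j, ‖x j‖ ≤ (1 / Real.sqrt m) * ‖∑ j, x j‖ + (1 / m) * ∑ j, ∑ k, M j k := by
  have hcard := CStarModuleOld.card_mul_sum_norm_le e x M hM h
  have hnorm_e := CStarModuleOld.norm_sum_le_sqrt_card_of_pairwise_inner_eq_zero e horth he
  rw [Fintype.card_fin] at hcard hnorm_e
  have hm' : (0 : ℝ) < m := Nat.cast_pos.2 hm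
  rw [show 1 / √(m : ℝ) * ‖∑ j, x j‖ + 1 / m * ∑ j, ∑ k, M j k
      = (√m * ‖∑ j, x j‖ + ∑ j, ∑ k, M j k) / m by
    field_simp; linear_combination -‖∑ j, x j‖ * Real.mul_self_sqrt hm'.le, le_div_iff₀ hm']
  nlinarith [mul_le_mul_of_nonneg_right hnorm_e (CStarModuleOld.norm_nonneg A (∑ j, x j))]
end

section
/- Let 𝔛 be a Hilbert module over a C*-algebra 𝔄, and let e₁,…,eₙ ∈ 𝔛 satisfy ⟨eᵢ,eⱼ⟩ = 0 for i ≠ j and ‖eᵢ‖ = 1. Then for every x ∈ 𝔛, |x − ∑ₖ eₖ·⟨eₖ,x⟩|² ≤ |x|² − ∑ₖ|⟨eₖ,x⟩|² in the order of 𝔄. -/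
open scoped RightActions

/-- The December 2024 Mathlib `CStarModule` (right Hilbert module, `Aᵐᵒᵖ` acting on the right),
restated under a new name since Mathlib's `CStarModule` is now a left module. -/
class RightCStarModule (A E : Type*) [NonUnitalSemiring A] [StarRing A] [Module ℂ A]
    [AddCommGroup E] [Module ℂ E] [PartialOrder A] [SMul Aᵐᵒᵖ E] [Norm A] [Norm E]
    extends Inner A E where
  inner_add_right {x} {y} {z} : inner x (y + z) = inner x y + inner x z
  inner_self_nonneg {x} : 0 ≤ inner x x
  inner_self {x} : inner x x = 0 ↔ x = 0
  inner_op_smul_right {a : A} {x y : E} : inner x (y <• a) = inner x y * a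
  inner_smul_right_complex {z : ℂ} {x} {y} : inner x (z • y) = z • inner x y
  star_inner x y : star (inner x y) = inner y x
  norm_eq_sqrt_norm_inner_self x : ‖x‖ = Real.sqrt ‖inner x x‖

/-!
Put `aₖ = ⟨eₖ, x⟩` and `y = ∑ eₖ·aₖ`. Then `⟨x, y⟩ = ⟨y, x⟩ = ∑ aₖ* aₖ`, and orthogonality kills the
cross terms of `⟨y, y⟩ = ∑ aₖ* ⟨eₖ, eₖ⟩ aₖ`. Since `‖⟨eₖ, eₖ⟩‖ = ‖eₖ‖² ≤ 1` and `⟨eₖ, eₖ⟩ ≥ 0`, we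
have `⟨eₖ, eₖ⟩ ≤ 1` in `A`, so `⟨y, y⟩ ≤ ∑ aₖ* aₖ` and expanding `⟨x - y, x - y⟩` gives the claim.
-/

namespace RightCStarModule

section Algebraic

variable {A E : Type*} [NonUnitalRing A] [StarRing A] [Module ℂ A] [PartialOrder A] [Norm A]
  [AddCommGroup E] [Module ℂ E] [SMul Aᵐᵒᵖ E] [Norm E] [RightCStarModule A E]

def innerRightAddHom (x : E) : E →+ A :=
  AddMonoidHom.mk' (fun y => inner A x y) fun _ _ => inner_add_right

theorem inner_sub_right (x y z : E) : inner A x (y - z) = inner A x y - inner A x z :=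
  map_sub (innerRightAddHom x) y z

theorem inner_sub_left (x y z : E) : inner A (x - y) z = inner A x z - inner A y z := by
  rw [← star_inner, inner_sub_right, star_sub, star_inner, star_inner]

theorem inner_sum_right {ι : Type*} (s : Finset ι) (x : E) (f : ι → E) :
    inner A x (∑ i ∈ s, f i) = ∑ i ∈ s, inner A x (f i) :=
  map_sum (innerRightAddHom x) f s

theorem inner_sum_left {ι : Type*} (s : Finset ι) (f : ι → E) (x : E) :
    inner A (∑ i ∈ s, f i) x = ∑ i ∈ s, inner A (f i) x := by
  rw [← star_inner, inner_sum_right, star_sum]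
  simp only [star_inner]

theorem inner_op_smul_left (a : A) (x y : E) : inner A (x <• a) y = star a * inner A x y := by
  rw [← star_inner, inner_op_smul_right, star_mul, star_inner]

theorem inner_op_smul_left_right (a b : A) (x y : E) :
    inner A (x <• a) (y <• b) = star a * inner A x y * b := by
  rw [inner_op_smul_left, inner_op_smul_right, mul_assoc]

theorem inner_sum_op_smul_self_of_pairwise {ι : Type*} (s : Finset ι) (e : ι → E) (a : ι → A)
    (horth : Pairwise fun i j => inner A (e i) (e j) = 0) :
    inner A (∑ i ∈ s, e i <• a i) (∑ i ∈ s, e i <• a i) =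
      ∑ i ∈ s, star (a i) * inner A (e i) (e i) * a i := by
  rw [inner_sum_left]
  refine Finset.sum_congr rfl fun i hi => ?_
  rw [inner_sum_right, Finset.sum_eq_single_of_mem i hi fun j _ hji => ?_,
    inner_op_smul_left_right]
  rw [inner_op_smul_left_right, horth hji.symm, mul_zero, zero_mul]

theorem inner_sum_op_smul_inner_right {ι : Type*} (s : Finset ι) (e : ι → E) (x : E) :
    inner A x (∑ i ∈ s, e i <• inner A (e i) x) =
      ∑ i ∈ s, star (inner A (e i) x) * inner A (e i) x := by
  simp only [inner_sum_right, inner_op_smul_right, star_inner]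

theorem inner_sum_op_smul_inner_left {ι : Type*} (s : Finset ι) (e : ι → E) (x : E) :
    inner A (∑ i ∈ s, e i <• inner A (e i) x) x =
      ∑ i ∈ s, star (inner A (e i) x) * inner A (e i) x := by
  simp only [inner_sum_left, inner_op_smul_left]

end Algebraic

variable {A E : Type*} [CStarAlgebra A] [PartialOrder A]
  [AddCommGroup E] [Module ℂ E] [SMul Aᵐᵒᵖ E] [Norm E] [RightCStarModule A E]

theorem norm_inner_self (x : E) : ‖(inner A x x : A)‖ = ‖x‖ ^ 2 := by
  rw [norm_eq_sqrt_norm_inner_self (A := A) x, Real.sq_sqrt (norm_nonneg _)]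

variable [StarOrderedRing A]

theorem inner_self_le_one {x : E} (hx : ‖x‖ ≤ 1) : (inner A x x : A) ≤ 1 := by
  have hx₀ : 0 ≤ ‖x‖ := norm_eq_sqrt_norm_inner_self (A := A) x ▸ Real.sqrt_nonneg _
  rw [← CStarAlgebra.norm_le_one_iff_of_nonneg _ inner_self_nonneg, norm_inner_self]
  exact pow_le_one₀ hx₀ hx

/-- Bessel's inequality. -/
theorem inner_sub_sum_op_smul_inner_le {ι : Type*} (s : Finset ι) (e : ι → E)
    (horth : Pairwise fun i j => inner A (e i) (e j) = 0) (hnorm : ∀ i, ‖e i‖ ≤ 1) (x : E) :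
    (inner A (x - ∑ i ∈ s, e i <• inner A (e i) x) (x - ∑ i ∈ s, e i <• inner A (e i) x) : A) ≤
      inner A x x - ∑ i ∈ s, star (inner A (e i) x) * inner A (e i) x := by
  set a : ι → A := fun i => inner A (e i) x
  have hcoeff : ∑ i ∈ s, star (a i) * inner A (e i) (e i) * a i ≤ ∑ i ∈ s, star (a i) * a i :=
    Finset.sum_le_sum fun i _ => by
      simpa using star_left_conjugate_le_conjugate (inner_self_le_one (hnorm i)) (a i)
  calc (inner A (x - ∑ i ∈ s, e i <• a i) (x - ∑ i ∈ s, e i <• a i) : A)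
      = inner A x x - ∑ i ∈ s, star (a i) * a i - ∑ i ∈ s, star (a i) * a i
          + ∑ i ∈ s, star (a i) * inner A (e i) (e i) * a i := by
        rw [inner_sub_left, inner_sub_right, inner_sub_right, inner_sum_op_smul_inner_right,
          inner_sum_op_smul_inner_left, inner_sum_op_smul_self_of_pairwise s e a horth]
        abel
    _ ≤ inner A x x - ∑ i ∈ s, star (a i) * a i - ∑ i ∈ s, star (a i) * a i
          + ∑ i ∈ s, star (a i) * a i := by gcongr
    _ = inner A x x - ∑ i ∈ s, star (a i) * a i := by abel

end RightCStarModule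

theorem stmt17 {A E : Type*} [CStarAlgebra A] [PartialOrder A] [StarOrderedRing A]
    [AddCommGroup E] [Module ℂ E] [SMul Aᵐᵒᵖ E] [Norm E] [RightCStarModule A E]
    (n : ℕ) (e : Fin n → E) (horth : ∀ i j, i ≠ j → (inner A (e i) (e j) : A) = 0)
    (hnorm : ∀ i, ‖e i‖ = 1) (x : E) :
    (inner A (x - ∑ k, e k <• (inner A (e k) x : A)) (x - ∑ k, e k <• (inner A (e k) x : A)) : A) ≤
      (inner A x x : A) - ∑ k, star (inner A (e k) x : A) * inner A (e k) x :=
  RightCStarModule.inner_sub_sum_op_smul_inner_le Finset.univ e (fun i j => horth i j)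
    (fun i => (hnorm i).le) x
end
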